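/- arXiv:1102.2389 — 4 statements merged into one kernel-verified Lean document; each statement's English description precedes it below -/
import Mathlib

section
/- For any complex matrices ρ and σ acting on ℂ^{d_S} ⊗ ℂ^{d_B}, the trace distance does not increase under partial trace: ‖Tr_B ρ − Tr_B σ‖₁ ≤ ‖ρ − σ‖₁. -/
open scoped ComplexOrder

noncomputable section

/-- The trace norm of a complex square matrix: the sum of its singular values,
equal to the trace of `√(Xᴴ X)`. -/
def traceNorm {n : Type*} [Fintype n] [DecidableEq n] (X : Matrix n n ℂ) : ℝ :=
  ((((Matrix.posSemidef_conjTranspose_mul_self X).1.eigenvectorUnitary : Matrix n n ℂ) *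
      Matrix.diagonal (((↑) : ℝ → ℂ) ∘ Real.sqrt ∘ (Matrix.posSemidef_conjTranspose_mul_self X).1.eigenvalues) *
      (star (Matrix.posSemidef_conjTranspose_mul_self X).1.eigenvectorUnitary : Matrix n n ℂ)).trace).re

/-- The operator norm (largest singular value) of a complex square matrix. -/
def opNorm {n : Type*} [Fintype n] [DecidableEq n] (X : Matrix n n ℂ) : ℝ :=
  ‖Matrix.toEuclideanCLM (𝕜 := ℂ) X‖
/-- The partial trace over the second (bath) tensor factor. -/
def ptraceB {dS dB : Type*} [Fintype dB] (M : Matrix (dS × dB) (dS × dB) ℂ) :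
    Matrix dS dS ℂ :=
  Matrix.of fun i j => ∑ b, M (i, b) (j, b)

/-! Trace-norm duality: `‖Y‖₁ = max {Re tr (A Y) | ‖A‖ ≤ 1}` for the operator norm `‖A‖`.
The partial trace is dual to `A ↦ A ⊗ 1`, i.e. `tr (A · Tr_B M) = tr ((A ⊗ 1) M)`, and `A ⊗ 1`
has operator norm at most `‖A‖`; so a maximizer `A` for `Y = Tr_B (ρ - σ)` gives
`‖Y‖₁ = Re tr ((A ⊗ 1)(ρ - σ)) ≤ ‖ρ - σ‖₁`. -/

open Matrix
open scoped InnerProductSpace Matrix.Norms.L2Operator Kronecker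

section TraceNormDuality

variable {n : Type*} [Fintype n] [DecidableEq n]

lemma Matrix.trace_eq_sum_inner_toEuclideanCLM {𝕜 : Type*} [RCLike 𝕜] (M : Matrix n n 𝕜)
    (b : OrthonormalBasis n 𝕜 (EuclideanSpace 𝕜 n)) :
    M.trace = ∑ i, ⟪b i, toEuclideanCLM (𝕜 := 𝕜) M (b i)⟫_𝕜 := by
  have h := LinearMap.trace_eq_sum_inner (toEuclideanLin M) b
  rwa [toEuclideanLin_eq_toLin_orthonormal, trace_toLin_eq] at h

lemma traceNorm_eq_sum_sqrt_eigenvalues (X : Matrix n n ℂ) :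
    traceNorm X = ∑ i, √((posSemidef_conjTranspose_mul_self X).isHermitian.eigenvalues i) := by
  rw [traceNorm, trace_mul_cycle, Unitary.coe_star_mul_self, one_mul, trace_diagonal,
    Complex.re_sum]
  rfl

lemma traceNorm_nonneg (X : Matrix n n ℂ) : 0 ≤ traceNorm X := by
  rw [traceNorm_eq_sum_sqrt_eigenvalues]
  positivity

lemma norm_toEuclideanCLM_eigenvectorBasis (X : Matrix n n ℂ) (j : n) :
    ‖toEuclideanCLM (𝕜 := ℂ) X
        ((posSemidef_conjTranspose_mul_self X).isHermitian.eigenvectorBasis j)‖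
      = √((posSemidef_conjTranspose_mul_self X).isHermitian.eigenvalues j) := by
  set hH := (posSemidef_conjTranspose_mul_self X).isHermitian
  have hb : toEuclideanCLM (𝕜 := ℂ) (Xᴴ * X) (hH.eigenvectorBasis j) =
      (hH.eigenvalues j : ℂ) • hH.eigenvectorBasis j := by
    ext1
    simp [hH.mulVec_eigenvectorBasis]
  rw [ContinuousLinearMap.apply_norm_eq_sqrt_inner_adjoint_right,
    ← ContinuousLinearMap.star_eq_adjoint, ← map_star, ← ContinuousLinearMap.mul_def, ← map_mul,
    star_eq_conjTranspose, hb, inner_smul_right]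
  simp

lemma re_trace_mul_le_norm_mul_traceNorm (A X : Matrix n n ℂ) :
    (A * X).trace.re ≤ ‖A‖ * traceNorm X := by
  set b := (posSemidef_conjTranspose_mul_self X).isHermitian.eigenvectorBasis
  rw [trace_eq_sum_inner_toEuclideanCLM _ b, traceNorm_eq_sum_sqrt_eigenvalues, Complex.re_sum,
    Finset.mul_sum]
  gcongr with j
  calc (⟪b j, toEuclideanCLM (𝕜 := ℂ) (A * X) (b j)⟫_ℂ).re
      ≤ ‖toEuclideanCLM (𝕜 := ℂ) A (toEuclideanCLM (𝕜 := ℂ) X (b j))‖ := by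
        simpa [b.orthonormal.1 j] using
          re_inner_le_norm (𝕜 := ℂ) (b j) (toEuclideanCLM (𝕜 := ℂ) (A * X) (b j))
    _ ≤ ‖A‖ * ‖toEuclideanCLM (𝕜 := ℂ) X (b j)‖ := ContinuousLinearMap.le_opNorm _ _
    _ = _ := by rw [norm_toEuclideanCLM_eigenvectorBasis]

/-- With `Yᴴ Y = V diag(s²) Vᴴ`, the witness is `A = V E Vᴴ Yᴴ` for `E = diag(s⁻¹)`: the adjoint
of the partial isometry `Y V E Vᴴ` in the polar decomposition of `Y`. On the kernel of `Y` the
junk value `0⁻¹ = 0` makes `E` vanish, as it should. -/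
lemma exists_norm_le_one_re_trace_mul_eq_traceNorm (Y : Matrix n n ℂ) :
    ∃ A : Matrix n n ℂ, ‖A‖ ≤ 1 ∧ (A * Y).trace.re = traceNorm Y := by
  set hH := (posSemidef_conjTranspose_mul_self Y).isHermitian
  set V : Matrix n n ℂ := (hH.eigenvectorUnitary : Matrix n n ℂ)
  set s : n → ℝ := fun i => √(hH.eigenvalues i)
  have hV : star V * (Yᴴ * Y) * V = diagonal fun i => ((s i * s i : ℝ) : ℂ) := by
    have h := hH.conjStarAlgAut_star_eigenvectorUnitary
    rw [Unitary.conjStarAlgAut_apply, Unitary.coe_star, star_star] at h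
    rw [h]
    congr 1
    funext i
    simp [s, Real.mul_self_sqrt ((posSemidef_conjTranspose_mul_self Y).eigenvalues_nonneg i)]
  set E : Matrix n n ℂ := diagonal fun i => (((s i)⁻¹ : ℝ) : ℂ)
  have hE : Eᴴ = E := by simp [E]
  set B := Y * V * E
  have hBY : Bᴴ * Y * V = E * (star V * (Yᴴ * Y) * V) := by
    simp only [B, conjTranspose_mul, hE, star_eq_conjTranspose, Matrix.mul_assoc]
  have hBB : Bᴴ * B = diagonal fun i => (((s i)⁻¹ * (s i * s i) * (s i)⁻¹ : ℝ) : ℂ) := by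
    rw [show Bᴴ * B = Bᴴ * Y * V * E by simp only [B, Matrix.mul_assoc], hBY, hV]
    simp only [E, diagonal_mul_diagonal, Complex.ofReal_mul]
  refine ⟨V * Bᴴ, ?_, ?_⟩
  · rw [CStarRing.norm_coe_unitary_mul hH.eigenvectorUnitary, l2_opNorm_conjTranspose]
    have hB : ‖B‖ * ‖B‖ ≤ 1 := by
      rw [← l2_opNorm_conjTranspose_mul_self, hBB, l2_opNorm_diagonal]
      refine (pi_norm_le_iff_of_nonneg zero_le_one).mpr fun i => ?_
      rcases eq_or_ne (s i) 0 with h | h <;> simp [h]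
    nlinarith [norm_nonneg B]
  · rw [Matrix.mul_assoc, trace_mul_comm, hBY, hV, traceNorm_eq_sum_sqrt_eigenvalues]
    simp [E, s, diagonal_mul_diagonal, trace_diagonal, ← mul_assoc, inv_mul_mul_self]

end TraceNormDuality

lemma Matrix.l2_opNorm_kronecker_one_le {𝕜 m b : Type*} [RCLike 𝕜] [Fintype m] [DecidableEq m]
    [Fintype b] [DecidableEq b] (A : Matrix m m 𝕜) :
    ‖A ⊗ₖ (1 : Matrix b b 𝕜)‖ ≤ ‖A‖ := by
  let slice (x : EuclideanSpace 𝕜 (m × b)) (c : b) : EuclideanSpace 𝕜 m :=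
    WithLp.toLp 2 fun i => x (i, c)
  have norm_sq_eq_sum_slice (x) : ‖x‖ ^ 2 = ∑ c, ‖slice x c‖ ^ 2 := by
    simp [slice, EuclideanSpace.norm_sq_eq, Fintype.sum_prod_type, Finset.sum_comm (γ := m)]
  have slice_apply (x c) : slice (toEuclideanCLM (𝕜 := 𝕜) (A ⊗ₖ 1) x) c =
      toEuclideanCLM (𝕜 := 𝕜) A (slice x c) := by
    ext i
    simp [slice, mulVec, dotProduct, Fintype.sum_prod_type, one_apply]
  rw [cstar_norm_def (A ⊗ₖ 1)]
  refine ContinuousLinearMap.opNorm_le_bound _ (norm_nonneg _) fun x => ?_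
  refine (sq_le_sq₀ (by positivity) (by positivity)).mp ?_
  rw [mul_pow, norm_sq_eq_sum_slice, norm_sq_eq_sum_slice x, Finset.mul_sum]
  gcongr with c
  rw [slice_apply, ← mul_pow]
  gcongr
  exact ContinuousLinearMap.le_opNorm _ _

lemma ptraceB_sub {dS dB : Type*} [Fintype dB] (M N : Matrix (dS × dB) (dS × dB) ℂ) :
    ptraceB (M - N) = ptraceB M - ptraceB N := by
  ext i j
  simp [ptraceB]

lemma trace_kronecker_one_mul_eq_trace_mul_ptraceB {dS dB : Type*} [Fintype dS] [Fintype dB] [DecidableEq dB]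
    (A : Matrix dS dS ℂ) (M : Matrix (dS × dB) (dS × dB) ℂ) :
    ((A ⊗ₖ (1 : Matrix dB dB ℂ)) * M).trace = (A * ptraceB M).trace := by
  simp only [trace, diag_apply, mul_apply, kroneckerMap_apply, one_apply, mul_ite, mul_one,
    mul_zero, ite_mul, zero_mul, Fintype.sum_prod_type, Finset.sum_ite_eq, Finset.mem_univ,
    ↓reduceIte, ptraceB, of_apply, Finset.mul_sum]
  exact Finset.sum_congr rfl fun _ _ => Finset.sum_comm

/-- the trace distance does not increase under the partial
trace over the bath. -/
theorem traceNorm_ptraceB_sub_le {dS dB : ℕ}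
    (ρ σ : Matrix (Fin dS × Fin dB) (Fin dS × Fin dB) ℂ) :
    traceNorm (ptraceB ρ - ptraceB σ) ≤ traceNorm (ρ - σ) := by
  obtain ⟨A, hA, hAY⟩ := exists_norm_le_one_re_trace_mul_eq_traceNorm (ptraceB ρ - ptraceB σ)
  calc traceNorm (ptraceB ρ - ptraceB σ)
      = ((A ⊗ₖ (1 : Matrix (Fin dB) (Fin dB) ℂ)) * (ρ - σ)).trace.re := by
        rw [← hAY, trace_kronecker_one_mul_eq_trace_mul_ptraceB, ptraceB_sub]
    _ ≤ ‖A ⊗ₖ (1 : Matrix (Fin dB) (Fin dB) ℂ)‖ * traceNorm (ρ - σ) :=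
        re_trace_mul_le_norm_mul_traceNorm _ _
    _ ≤ traceNorm (ρ - σ) :=
        mul_le_of_le_one_left (traceNorm_nonneg _) ((l2_opNorm_kronecker_one_le A).trans hA)

end
end

section
/- Let n ≥ 1, let E₁, …, E_n ∈ ℝ, β ∈ ℝ, and γ₁, …, γ_n ∈ ℝ, and let γ_min = min_k γ_k and γ_max = max_k γ_k. Define probability weights p_k = e^{−βE_k + γ_k} / Σ_{l=1}^n e^{−βE_l + γ_l} and q_k = e^{−βE_k} / Σ_{l=1}^n e^{−βE_l}. Then the total variation distance satisfies ½ Σ_{k=1}^n |p_k − q_k| ≤ ½ (e^{γ_max − γ_min} − 1). -/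
/-- the total variation distance between the perturbed-exponential
weights `p_k ∝ e^{−βE_k + γ_k}` and the Gibbs weights `q_k ∝ e^{−βE_k}` is
controlled by the spread of the `γ_k`. -/
theorem tv_perturbed_gibbs {ι : Type*} [Fintype ι] [Nonempty ι]
    (E γ : ι → ℝ) (β : ℝ) (γmin γmax : ℝ)
    (hγmin : γmin = Finset.univ.inf' Finset.univ_nonempty γ)
    (hγmax : γmax = Finset.univ.sup' Finset.univ_nonempty γ)
    (p q : ι → ℝ)
    (hp : ∀ k, p k = Real.exp (-β * E k + γ k) / ∑ l, Real.exp (-β * E l + γ l))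
    (hq : ∀ k, q k = Real.exp (-β * E k) / ∑ l, Real.exp (-β * E l)) :
    (1 / 2) * ∑ k, |p k - q k| ≤ (1 / 2) * (Real.exp (γmax - γmin) - 1) := by
  set Zp := ∑ l, Real.exp (-β * E l + γ l) with hZp
  set Zq := ∑ l, Real.exp (-β * E l) with hZq
  have hZppos : 0 < Zp := Finset.sum_pos (fun i _ => Real.exp_pos _) Finset.univ_nonempty
  have hZqpos : 0 < Zq := Finset.sum_pos (fun i _ => Real.exp_pos _) Finset.univ_nonempty
  have hγle : ∀ k : ι, γmin ≤ γ k ∧ γ k ≤ γmax := by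
    intro k
    constructor
    · rw [hγmin]; exact Finset.inf'_le _ (Finset.mem_univ k)
    · rw [hγmax]; exact Finset.le_sup' _ (Finset.mem_univ k)
  have hZ1 : Real.exp γmin * Zq ≤ Zp := by
    rw [hZp, hZq, Finset.mul_sum]
    apply Finset.sum_le_sum
    intro l _
    rw [Real.exp_add]
    rw [mul_comm]
    exact mul_le_mul_of_nonneg_left (Real.exp_le_exp.2 (hγle l).1) (Real.exp_pos _).le
  have hZ2 : Zp ≤ Real.exp γmax * Zq := by
    rw [hZp, hZq, Finset.mul_sum]
    apply Finset.sum_le_sum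
    intro l _
    rw [Real.exp_add, mul_comm (Real.exp (-β * E l))]
    exact mul_le_mul_of_nonneg_right (Real.exp_le_exp.2 (hγle l).2) (Real.exp_pos _).le
  set Δ := γmax - γmin with hΔ
  have hΔ0 : 0 ≤ Δ := by
    have := (hγle (Classical.arbitrary ι))
    linarith [this.1, this.2]
  have key : ∀ k, |p k - q k| ≤ (Real.exp Δ - 1) * q k := by
    intro k
    have hpk : p k = Real.exp (-β * E k) * Real.exp (γ k) / Zp := by
      rw [hp k, Real.exp_add]
    have hqk : q k = Real.exp (-β * E k) / Zq := hq k
    have hqpos : 0 < q k := by rw [hqk]; positivity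
    have h1 : p k ≤ Real.exp Δ * q k := by
      rw [hpk, hqk, hΔ, Real.exp_sub, div_mul_div_comm, div_le_div_iff₀ hZppos (by positivity)]
      nlinarith [mul_le_mul (Real.exp_le_exp.2 (hγle k).2) hZ1 (by positivity) (Real.exp_pos γmax).le,
        Real.exp_pos (-β * E k), Real.exp_pos γmin, hZqpos]
    have h2 : Real.exp (-Δ) * q k ≤ p k := by
      rw [hpk, hqk, hΔ, neg_sub, Real.exp_sub, div_mul_div_comm, div_le_div_iff₀ (by positivity) hZppos]
      nlinarith [mul_le_mul (Real.exp_le_exp.2 (hγle k).1) hZ2 (by positivity) (Real.exp_pos (γ k)).le,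
        Real.exp_pos (-β * E k), Real.exp_pos γmax, hZqpos]
    have htwo : 2 ≤ Real.exp Δ + Real.exp (-Δ) := by
      have a := Real.add_one_le_exp Δ
      have b := Real.add_one_le_exp (-Δ)
      linarith
    rcases abs_cases (p k - q k) with ⟨he, _⟩ | ⟨he, _⟩ <;> rw [he]
    · nlinarith
    · nlinarith
  have hsumq : ∑ k, q k = 1 := by
    rw [Finset.sum_congr rfl (fun k _ => hq k), ← Finset.sum_div, ← hZq, div_self hZqpos.ne']
  have hsum : ∑ k, |p k - q k| ≤ Real.exp Δ - 1 := by
    calc ∑ k, |p k - q k| ≤ ∑ k, (Real.exp Δ - 1) * q k := Finset.sum_le_sum fun k _ => key k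
      _ = (Real.exp Δ - 1) * ∑ k, q k := by rw [Finset.mul_sum]
      _ = Real.exp Δ - 1 := by rw [hsumq, mul_one]
  linarith
end

section
/- Let a > 0, Δ > 0 and c ∈ ℝ, and define g : ℝ → ℝ by g(E) = ∫_E^{E+Δ} e^{−a(x−c)²} dx. Then g is positive and smooth, and its logarithm is strictly concave with curvature bounded below: for every E ∈ ℝ, −2a < (d²/dE²) log g(E) < 0. -/
open Real

/-- Pure algebra core: the bounds on `N = (f₁B - f₁E)·I0 - (fB - fE)²` follow from
the two moment identities plus positivity facts. -/
lemma gwlc_core (a c E B fE fB I0 I1 I2 : ℝ) (ha : 0 < a)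
    (hfE : 0 < fE) (hfB : 0 < fB) (hI0 : 0 < I0)
    (hA : -(2*a)*I1 + 2*a*c*I0 = fB - fE)
    (hBm : I0 - 2*a*I2 + 2*a*c*I1 = B*fB - E*fE)
    (hP : 0 < B*I0 - I1) (hQ : 0 < I1 - E*I0)
    (hV : I1^2 < I2*I0) :
    -(2*a)*I0^2 < (-(2*a)*(B-c) * fB - -(2*a)*(E-c) * fE)*I0 - (fB-fE)^2 ∧
    (-(2*a)*(B-c) * fB - -(2*a)*(E-c) * fE)*I0 - (fB-fE)^2 < 0 := by
  constructor
  · have key : (-(2*a)*(B-c) * fB - -(2*a)*(E-c) * fE)*I0 - (fB-fE)^2 + 2*a*I0^2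
        = 4*a^2*(I2*I0 - I1^2) := by
      linear_combination (2*a*I0)*hBm + (fB - fE - 2*a*I1)*hA
    have hpos : 0 < 4*a^2*(I2*I0 - I1^2) := by
      have h1 : (0:ℝ) < 4*a^2 := by positivity
      have h2 : 0 < I2*I0 - I1^2 := by linarith
      exact mul_pos h1 h2
    nlinarith [key]
  · have key : (-(2*a)*(B-c) * fB - -(2*a)*(E-c) * fE)*I0 - (fB-fE)^2
        = -(2*a) * (fB*(B*I0-I1) + fE*(I1-E*I0)) := by
      linear_combination (fB - fE)*hA
    rw [key]
    have hpos : 0 < fB*(B*I0-I1) + fE*(I1-E*I0) :=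
      add_pos (mul_pos hfB hP) (mul_pos hfE hQ)
    nlinarith [hpos]

/-- the sliding-window integral of a Gaussian is positive and
smooth, and its logarithm is strictly concave with curvature strictly between
`−2a` and `0`. -/
theorem gaussian_window_log_concave (a Δ c : ℝ) (ha : 0 < a) (hΔ : 0 < Δ)
    (g : ℝ → ℝ) (hg : ∀ E, g E = ∫ x in E..(E + Δ), Real.exp (-a * (x - c) ^ 2)) :
    (∀ E, 0 < g E) ∧ ContDiff ℝ (⊤ : ℕ∞) g ∧
      StrictConcaveOn ℝ Set.univ (fun E => Real.log (g E)) ∧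
      ∀ E, -(2 * a) < iteratedDeriv 2 (fun E => Real.log (g E)) E ∧
        iteratedDeriv 2 (fun E => Real.log (g E)) E < 0 := by
  set f : ℝ → ℝ := fun x => Real.exp (-a * (x - c) ^ 2) with hfdef
  have hfc : Continuous f := by fun_prop
  have hfpos : ∀ x, 0 < f x := fun x => Real.exp_pos _
  have hfint : ∀ u v : ℝ, IntervalIntegrable f MeasureTheory.volume u v :=
    fun u v => hfc.intervalIntegrable u v
  -- derivative of f
  have hfd : ∀ x : ℝ, HasDerivAt f (-(2*a)*(x-c) * f x) x := by
    intro x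
    have h1 : HasDerivAt (fun x : ℝ => -a * (x - c)^2) (-(2*a)*(x-c)) x := by
      have := (((hasDerivAt_id x).sub_const c).pow 2).const_mul (-a)
      refine this.congr_deriv ?_
      simp only [id_eq]
      ring
    have h2 := h1.exp
    convert h2 using 1
    simp only [hfdef]
    ring
  -- primitive and derivative of g
  set F : ℝ → ℝ := fun y => ∫ x in (0:ℝ)..y, f x with hFdef
  have hgF : ∀ E : ℝ, g E = F (E + Δ) - F E := by
    intro E
    have h := intervalIntegral.integral_add_adjacent_intervals
      (hfint 0 E) (hfint E (E + Δ))
    rw [hg E]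
    simp only [hFdef]
    rw [← h]
    ring
  have hFd : ∀ y : ℝ, HasDerivAt F (f y) y := fun y =>
    intervalIntegral.integral_hasDerivAt_right (hfint 0 y)
      (hfc.stronglyMeasurableAtFilter _ _) hfc.continuousAt
  have hgfun : g = fun E => F (E + Δ) - F E := funext hgF
  have hgd : ∀ E : ℝ, HasDerivAt g (f (E + Δ) - f E) E := by
    intro E
    rw [hgfun]
    exact ((hFd (E + Δ)).comp_add_const E Δ).sub (hFd E)
  have hgpos : ∀ E, 0 < g E := by
    intro E
    rw [hg E]
    exact intervalIntegral.intervalIntegral_pos_of_pos (hfint E (E + Δ))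
      hfpos (by linarith)
  -- the log function and its derivatives
  set h : ℝ → ℝ := fun E => Real.log (g E) with hhdef
  set f1 : ℝ → ℝ := fun x => -(2*a)*(x-c) * f x with hf1def
  have hshift : ∀ E : ℝ, HasDerivAt (fun E => f (E + Δ)) (f1 (E + Δ)) E :=
    fun E => (hfd (E + Δ)).comp_add_const E Δ
  have hhd : ∀ E : ℝ, HasDerivAt h ((f (E + Δ) - f E) / g E) E :=
    fun E => (hgd E).log (hgpos E).ne'
  have hdh : deriv h = fun E => (f (E + Δ) - f E) / g E := funext fun E => (hhd E).deriv
  have hh2 : ∀ E : ℝ, HasDerivAt (deriv h)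
      (((f1 (E + Δ) - f1 E) * g E - (f (E + Δ) - f E) * (f (E + Δ) - f E)) / (g E)^2) E := by
    intro E
    rw [hdh]
    exact ((hshift E).sub (hfd E)).div (hgd E) (hgpos E).ne'
  have hiter : ∀ E : ℝ, iteratedDeriv 2 h E
      = ((f1 (E + Δ) - f1 E) * g E - (f (E + Δ) - f E)^2) / (g E)^2 := by
    intro E
    rw [show (2:ℕ) = 1 + 1 from rfl, iteratedDeriv_succ, iteratedDeriv_one, (hh2 E).deriv]
    ring_nf
  -- the key bounds at each point E
  have hkey : ∀ E : ℝ, -(2*a) * (g E)^2 <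
      (f1 (E + Δ) - f1 E) * g E - (f (E + Δ) - f E)^2 ∧
      (f1 (E + Δ) - f1 E) * g E - (f (E + Δ) - f E)^2 < 0 := by
    intro E
    set B : ℝ := E + Δ with hBdef
    have hEB : E < B := by rw [hBdef]; linarith
    set I0 : ℝ := ∫ x in E..B, f x with hI0def
    set I1 : ℝ := ∫ x in E..B, x * f x with hI1def
    set I2 : ℝ := ∫ x in E..B, x^2 * f x with hI2def
    have hxfc : Continuous fun x : ℝ => x * f x := by fun_prop
    have hx2fc : Continuous fun x : ℝ => x^2 * f x := by fun_prop
    have hI0pos : 0 < I0 :=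
      intervalIntegral.intervalIntegral_pos_of_pos (hfint E B) hfpos hEB
    have hgI0 : g E = I0 := hg E
    -- first moment identity
    have hA : -(2*a)*I1 + 2*a*c*I0 = f B - f E := by
      have ftc : ∫ x in E..B, (-(2*a)*(x-c) * f x) = f B - f E :=
        intervalIntegral.integral_eq_sub_of_hasDerivAt (fun x _ => hfd x)
          ((by fun_prop : Continuous fun x : ℝ => -(2*a)*(x-c) * f x).intervalIntegrable E B)
      have heq : (fun x : ℝ => -(2*a)*(x-c) * f x)
          = fun x : ℝ => (-(2*a)) * (x * f x) + (2*a*c) * (f x) := by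
        funext x; ring
      rw [heq, intervalIntegral.integral_add ((hxfc.intervalIntegrable E B).const_mul _)
        ((hfint E B).const_mul _), intervalIntegral.integral_const_mul,
        intervalIntegral.integral_const_mul] at ftc
      linarith [ftc]
    -- second moment identity
    have hBm : I0 - 2*a*I2 + 2*a*c*I1 = B * f B - E * f E := by
      have hxd : ∀ x : ℝ, HasDerivAt (fun x : ℝ => x * f x)
          (1 * f x + x * (-(2*a)*(x-c) * f x)) x :=
        fun x => (hasDerivAt_id x).mul (hfd x)
      have ftc : ∫ x in E..B, (1 * f x + x * (-(2*a)*(x-c) * f x)) = B * f B - E * f E :=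
        intervalIntegral.integral_eq_sub_of_hasDerivAt (fun x _ => hxd x)
          ((by fun_prop : Continuous fun x : ℝ =>
            1 * f x + x * (-(2*a)*(x-c) * f x)).intervalIntegrable E B)
      have heq : (fun x : ℝ => 1 * f x + x * (-(2*a)*(x-c) * f x))
          = fun x : ℝ => f x + ((-(2*a)) * (x^2 * f x) + (2*a*c) * (x * f x)) := by
        funext x; ring
      rw [heq, intervalIntegral.integral_add (hfint E B)
        (((hx2fc.intervalIntegrable E B).const_mul _).add
          ((hxfc.intervalIntegrable E B).const_mul _)),
        intervalIntegral.integral_add ((hx2fc.intervalIntegrable E B).const_mul _)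
          ((hxfc.intervalIntegrable E B).const_mul _),
        intervalIntegral.integral_const_mul, intervalIntegral.integral_const_mul] at ftc
      linarith [ftc]
    -- positivity of the two boundary-weighted integrals
    have hP : 0 < B*I0 - I1 := by
      have hval : ∫ x in E..B, (B - x) * f x = B*I0 - I1 := by
        have heq : (fun x : ℝ => (B - x) * f x)
            = fun x : ℝ => B * f x - x * f x := by funext x; ring
        rw [heq, intervalIntegral.integral_sub ((hfint E B).const_mul _)
          (hxfc.intervalIntegrable E B), intervalIntegral.integral_const_mul]
      rw [← hval]
      exact intervalIntegral.intervalIntegral_pos_of_pos_on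
        ((by fun_prop : Continuous fun x : ℝ => (B - x) * f x).intervalIntegrable E B)
        (fun x hx => mul_pos (by linarith [hx.2]) (hfpos x)) hEB
    have hQ : 0 < I1 - E*I0 := by
      have hval : ∫ x in E..B, (x - E) * f x = I1 - E*I0 := by
        have heq : (fun x : ℝ => (x - E) * f x)
            = fun x : ℝ => x * f x - E * f x := by funext x; ring
        rw [heq, intervalIntegral.integral_sub (hxfc.intervalIntegrable E B)
          ((hfint E B).const_mul _), intervalIntegral.integral_const_mul]
      rw [← hval]
      exact intervalIntegral.intervalIntegral_pos_of_pos_on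
        ((by fun_prop : Continuous fun x : ℝ => (x - E) * f x).intervalIntegrable E B)
        (fun x hx => mul_pos (by linarith [hx.1]) (hfpos x)) hEB
    -- variance positivity
    have hV : I1^2 < I2*I0 := by
      set m : ℝ := I1 / I0 with hmdef
      have hJval : ∫ x in E..B, (x - m)^2 * f x = I2 - 2*m*I1 + m^2*I0 := by
        have heq : (fun x : ℝ => (x - m)^2 * f x)
            = fun x : ℝ => x^2 * f x - (2*m) * (x * f x) + m^2 * f x := by
          funext x; ring
        rw [heq, intervalIntegral.integral_add
          ((hx2fc.intervalIntegrable E B).sub ((hxfc.intervalIntegrable E B).const_mul _))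
          ((hfint E B).const_mul _),
          intervalIntegral.integral_sub (hx2fc.intervalIntegrable E B)
            ((hxfc.intervalIntegrable E B).const_mul _),
          intervalIntegral.integral_const_mul, intervalIntegral.integral_const_mul]
        try ring
      have hJc : Continuous fun x : ℝ => (x - m)^2 * f x := by fun_prop
      have hJpos : 0 < ∫ x in E..B, (x - m)^2 * f x := by
        set mid : ℝ := (E + B)/2 with hmiddef
        have hEmid : E < mid := by rw [hmiddef]; linarith
        have hmidB : mid < B := by rw [hmiddef]; linarith
        have hsplit := intervalIntegral.integral_add_adjacent_intervals
          (μ := MeasureTheory.volume)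
          (hJc.intervalIntegrable E mid) (hJc.intervalIntegrable mid B)
        rcases le_or_gt m mid with hm | hm
        · have h1 : 0 ≤ ∫ x in E..mid, (x - m)^2 * f x :=
            intervalIntegral.integral_nonneg hEmid.le
              (fun u _ => by positivity)
          have h2 : 0 < ∫ x in mid..B, (x - m)^2 * f x :=
            intervalIntegral.intervalIntegral_pos_of_pos_on
              (hJc.intervalIntegrable mid B)
              (fun x hx => mul_pos (by nlinarith [hx.1, hm]) (hfpos x)) hmidB
          linarith [hsplit]
        · have h1 : 0 < ∫ x in E..mid, (x - m)^2 * f x :=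
            intervalIntegral.intervalIntegral_pos_of_pos_on
              (hJc.intervalIntegrable E mid)
              (fun x hx => mul_pos (by nlinarith [hx.2, hm]) (hfpos x)) hEmid
          have h2 : 0 ≤ ∫ x in mid..B, (x - m)^2 * f x :=
            intervalIntegral.integral_nonneg hmidB.le
              (fun u _ => by positivity)
          linarith [hsplit]
      rw [hJval] at hJpos
      have hI0ne : I0 ≠ 0 := hI0pos.ne'
      have hfinal : I2*I0 - I1^2 = I0 * (I2 - 2*m*I1 + m^2*I0) := by
        rw [hmdef]; field_simp; ring
      nlinarith [mul_pos hI0pos hJpos]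
    have hcore := gwlc_core a c E B (f E) (f B) I0 I1 I2 ha (hfpos E) (hfpos B)
      hI0pos hA hBm hP hQ hV
    rw [hgI0]
    exact hcore
  -- assemble
  have hupper : ∀ E : ℝ, iteratedDeriv 2 h E < 0 := by
    intro E
    rw [hiter E]
    exact div_neg_of_neg_of_pos (hkey E).2 (pow_pos (hgpos E) 2)
  have hlower : ∀ E : ℝ, -(2 * a) < iteratedDeriv 2 h E := by
    intro E
    rw [hiter E]
    rw [lt_div_iff₀ (pow_pos (hgpos E) 2)]
    have := (hkey E).1
    linarith
  have hgc : Continuous g := by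
    have : Differentiable ℝ g := fun E => (hgd E).differentiableAt
    exact this.continuous
  have hhc : Continuous h := hgc.log fun x => (hgpos x).ne'
  have hconcave : StrictConcaveOn ℝ Set.univ h := by
    apply strictConcaveOn_of_deriv2_neg convex_univ hhc.continuousOn
    intro x _
    rw [← iteratedDeriv_eq_iterate]
    exact hupper x
  -- smoothness of g via complexification
  have hsmooth : ContDiff ℝ (⊤ : ℕ∞) g := by
    set fC : ℂ → ℂ := fun z => Complex.exp (-(a:ℂ) * (z - (c:ℂ)) ^ 2) with hfCdef
    have hfCc : Continuous fC := by fun_prop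
    have hfCd : ∀ z : ℂ, HasDerivAt fC (-(2*(a:ℂ))*(z - c) * fC z) z := by
      intro z
      have h1 : HasDerivAt (fun z : ℂ => -(a:ℂ) * (z - c)^2) (-(2*(a:ℂ))*(z-c)) z := by
        have := (((hasDerivAt_id z).sub_const (c:ℂ)).pow 2).const_mul (-(a:ℂ))
        refine this.congr_deriv ?_
        simp only [id_eq]
        ring
      have h2 := h1.cexp
      refine h2.congr_deriv ?_
      simp only [hfCdef]
      ring
    set G : ℂ → ℂ := fun z => ∫ t in (0:ℝ)..Δ, fC (z + (t:ℂ)) with hGdef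
    have hGd : ∀ z₀ : ℂ, DifferentiableAt ℂ G z₀ := by
      intro z₀
      obtain ⟨C, hC⟩ := (isCompact_closedBall z₀ (1 + Δ)).exists_bound_of_continuousOn
        (Continuous.continuousOn (by fun_prop :
          Continuous fun w : ℂ => -(2*(a:ℂ))*(w - c) * fC w))
      have hmem : ∀ t : ℝ, t ∈ Set.uIoc (0:ℝ) Δ → ∀ x ∈ Metric.ball z₀ 1,
          x + (t:ℂ) ∈ Metric.closedBall z₀ (1 + Δ) := by
        intro t ht x hx
        rw [Set.uIoc_of_le hΔ.le] at ht
        rw [Metric.mem_closedBall]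
        have h1 : dist (x + (t:ℂ)) x ≤ Δ := by
          have hxt : x + (t:ℂ) - x = (t:ℂ) := by ring
          rw [dist_eq_norm, hxt, Complex.norm_real, Real.norm_eq_abs, abs_of_pos ht.1]
          exact ht.2
        have h2 : dist x z₀ < 1 := Metric.mem_ball.mp hx
        calc dist (x + (t:ℂ)) z₀ ≤ dist (x + (t:ℂ)) x + dist x z₀ := dist_triangle _ _ _
          _ ≤ 1 + Δ := by linarith
      have key := intervalIntegral.hasDerivAt_integral_of_dominated_loc_of_deriv_le
        (F := fun (x : ℂ) (t : ℝ) => fC (x + (t:ℂ)))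
        (F' := fun (x : ℂ) (t : ℝ) => -(2*(a:ℂ))*((x + (t:ℂ)) - c) * fC (x + (t:ℂ)))
        (x₀ := z₀) (s := Metric.ball z₀ 1) (bound := fun _ => C) (a := (0:ℝ)) (b := Δ)
        (μ := MeasureTheory.volume)
        (Metric.ball_mem_nhds z₀ one_pos)
        (Filter.Eventually.of_forall fun x =>
          ((hfCc.comp (by fun_prop : Continuous fun t : ℝ =>
            x + (t:ℂ))).aestronglyMeasurable))
        ((hfCc.comp (by fun_prop : Continuous fun t : ℝ =>
          z₀ + (t:ℂ))).intervalIntegrable 0 Δ)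
        ((by fun_prop : Continuous fun t : ℝ =>
          -(2*(a:ℂ))*((z₀ + (t:ℂ)) - c) * fC (z₀ + (t:ℂ))).aestronglyMeasurable)
        (Filter.Eventually.of_forall fun t ht x hx => hC _ (hmem t ht x hx))
        (intervalIntegrable_const)
        (Filter.Eventually.of_forall fun t _ x _ => (hfCd (x + (t:ℂ))).comp_add_const x (t:ℂ))
      exact key.2.differentiableAt
    have hGan : AnalyticOnNhd ℂ G Set.univ :=
      (Differentiable.differentiableOn fun z => hGd z).analyticOnNhd isOpen_univ
    have hgG : g = fun E : ℝ => (G (E:ℂ)).re := by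
      funext E
      have h1 : ∀ t : ℝ, fC ((E:ℂ) + (t:ℂ)) = ((f (E + t) : ℝ) : ℂ) := by
        intro t
        simp only [hfCdef, hfdef]
        rw [Complex.ofReal_exp]
        congr 1
        push_cast
        ring
      have h2 : G (E:ℂ) = ((g E : ℝ) : ℂ) := by
        simp only [hGdef]
        rw [intervalIntegral.integral_congr (fun t _ => h1 t),
          intervalIntegral.integral_ofReal]
        congr 1
        rw [hg E]
        have := intervalIntegral.integral_comp_add_left (a := (0:ℝ)) (b := Δ) f E
        simp only [add_zero] at this
        exact this
      rw [h2, Complex.ofReal_re]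
    rw [hgG]
    have h1 : AnalyticOnNhd ℝ G Set.univ := hGan.restrictScalars
    have h2 : AnalyticOnNhd ℝ (fun E : ℝ => G (E:ℂ)) Set.univ :=
      h1.comp (Complex.ofRealCLM.analyticOnNhd Set.univ) (Set.mapsTo_univ _ _)
    have h3 : AnalyticOnNhd ℝ (fun E : ℝ => (G (E:ℂ)).re) Set.univ :=
      (Complex.reCLM.analyticOnNhd Set.univ).comp h2 (Set.mapsTo_univ _ _)
    exact h3.contDiff
  exact ⟨hgpos, hsmooth, hconcave, fun E => ⟨hlower E, hupper E⟩⟩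
end

section
/- Let a > 0, Δ > 0, c ∈ ℝ, and define g(E) = ∫_E^{E+Δ} e^{−a(x−c)²} dx. Let n ≥ 1, M > 0, let E₁, …, E_n ∈ [−M, M], fix E ∈ ℝ, and set β = (d/dE') log g(E') evaluated at E' = E. Define p_k = g(E − E_k) / Σ_{l=1}^n g(E − E_l) and q_k = e^{−βE_k} / Σ_{l=1}^n e^{−βE_l}. Then ½ Σ_{k=1}^n |p_k − q_k| ≤ ½ (e^{aM²} − 1). -/
/-!
Write `G` for the integral of `w x = exp (-a (x - c)²)` over the window `[t, t + Δ]` and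
`Jₖ = ∫ (x - c)ᵏ w` over it. Then `G' = -2a J₁`, and `∫ ((x - c) w)' = ∫ (1 - 2a (x - c)²) w`
gives `G G'' - G'² = -2a G² + 4a² (J₀ J₂ - J₁²)`. This is at least `-2a G²` by Cauchy–Schwarz, and
at most `0` because the mean `J₁ / J₀` of `x - c` lies in the window. So `-2a ≤ (log G)'' ≤ 0`,
and `log G` stays within `a (y - x)²` of its tangent at `x`: the weights `G (E - E_k)` and
`G E · exp (-β E_k)` differ by a factor at most `exp (a M²)` either way. For probability vectors
whose ratio `X = p / q` takes values in `[m, λ² m]`, bounding `|X - 1|` by its chord over that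
interval and averaging against `q` gives `∑ |p - q| ≤ λ - 1`.
-/

open Real intervalIntegral
open MeasureTheory (volume)

theorem add_deriv_mul_sub_le_of_monotone {f f' : ℝ → ℝ} (hf : ∀ t, HasDerivAt f (f' t) t)
    (hf' : Monotone f') (x y : ℝ) : f x + f' x * (y - x) ≤ f y := by
  have hderiv : deriv f = f' := funext fun t => (hf t).deriv
  have hconv : ConvexOn ℝ Set.univ f :=
    Monotone.convexOn_univ_of_deriv (fun t => (hf t).differentiableAt) (hderiv ▸ hf')
  rcases lt_trichotomy x y with hxy | rfl | hxy
  · have h := hconv.le_slope_of_hasDerivAt trivial trivial hxy (hf x)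
    rw [slope_def_field, le_div_iff₀ (sub_pos.2 hxy)] at h
    linarith
  · simp
  · have h := hconv.slope_le_of_hasDerivAt trivial trivial hxy (hf x)
    rw [slope_def_field, div_le_iff₀ (sub_pos.2 hxy)] at h
    linarith

theorem add_deriv_mul_sub_add_le_of_le_deriv2 {f f' f'' : ℝ → ℝ} {m : ℝ}
    (hf : ∀ t, HasDerivAt f (f' t) t) (hf' : ∀ t, HasDerivAt f' (f'' t) t) (hm : ∀ t, m ≤ f'' t)
    (x y : ℝ) : f x + f' x * (y - x) + m / 2 * (y - x) ^ 2 ≤ f y := by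
  have hh : ∀ t, HasDerivAt (fun t => f t - m / 2 * (t - x) ^ 2) (f' t - m * (t - x)) t :=
    fun t => ((hf t).sub ((((hasDerivAt_id t).sub_const x).pow 2).const_mul (m / 2))).congr_deriv
      (by simp only [Nat.cast_ofNat, id_eq, Nat.add_one_sub_one, pow_one]; ring)
  have hh' : ∀ t, HasDerivAt (fun t => f' t - m * (t - x)) (f'' t - m) t :=
    fun t => ((hf' t).sub (((hasDerivAt_id t).sub_const x).const_mul m)).congr_deriv
      (by simp only [mul_one])
  have hmono : Monotone fun t => f' t - m * (t - x) :=
    monotone_of_deriv_nonneg (fun t => (hh' t).differentiableAt)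
      fun t => (hh' t).deriv ▸ sub_nonneg.2 (hm t)
  have := add_deriv_mul_sub_le_of_monotone hh hmono x y
  simp only [sub_self, mul_zero, sub_zero] at this
  linarith

theorem sq_integral_mul_le_integral_mul_integral_sq_mul {f w : ℝ → ℝ} {s t : ℝ} (hst : s ≤ t)
    (hw : IntervalIntegrable w volume s t)
    (hfw : IntervalIntegrable (fun x => f x * w x) volume s t)
    (hffw : IntervalIntegrable (fun x => f x ^ 2 * w x) volume s t)
    (hw0 : ∀ x ∈ Set.Icc s t, 0 ≤ w x) :
    (∫ x in s..t, f x * w x) ^ 2 ≤ (∫ x in s..t, w x) * ∫ x in s..t, f x ^ 2 * w x := by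
  have hquad : ∀ μ : ℝ, 0 ≤ (∫ x in s..t, w x) * (μ * μ)
      + (-2 * ∫ x in s..t, f x * w x) * μ + ∫ x in s..t, f x ^ 2 * w x := by
    intro μ
    have hexpand : ∫ x in s..t, (f x - μ) ^ 2 * w x = (∫ x in s..t, w x) * (μ * μ)
        + (-2 * ∫ x in s..t, f x * w x) * μ + ∫ x in s..t, f x ^ 2 * w x := by
      have : (fun x => (f x - μ) ^ 2 * w x)
          = fun x => (μ * μ) * w x + (-2 * μ) * (f x * w x) + f x ^ 2 * w x := by
        funext x; ring
      rw [this, integral_add ((hw.const_mul _).add (hfw.const_mul _)) hffw,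
        integral_add (hw.const_mul _) (hfw.const_mul _), integral_const_mul,
        integral_const_mul]
      ring
    rw [← hexpand]
    exact integral_nonneg hst fun x hx => mul_nonneg (sq_nonneg _) (hw0 x hx)
  have := discrim_le_zero hquad
  rw [discrim] at this
  linarith

theorem Continuous.hasDerivAt_integral_window {f : ℝ → ℝ} (hf : Continuous f) (Δ t : ℝ) :
    HasDerivAt (fun t => ∫ x in t..t + Δ, f x) (f (t + Δ) - f t) t := by
  have hF : ∀ u, HasDerivAt (fun u => ∫ x in (0 : ℝ)..u, f x) (f u) u :=
    fun u => (hf.integral_hasStrictDerivAt 0 u).hasDerivAt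
  refine (((hF (t + Δ)).comp_add_const t Δ).sub (hF t)).congr_of_eventuallyEq
    (Filter.Eventually.of_forall fun u => ?_)
  exact (integral_interval_sub_left (hf.intervalIntegrable _ _) (hf.intervalIntegrable _ _)).symm

noncomputable def gaussian (a c x : ℝ) : ℝ := exp (-a * (x - c) ^ 2)

noncomputable def gaussianWindow (a Δ c t : ℝ) : ℝ := ∫ x in t..t + Δ, gaussian a c x

section Gaussian

variable {a Δ c : ℝ}

theorem gaussian_pos (x : ℝ) : 0 < gaussian a c x := exp_pos _

theorem continuous_gaussian : Continuous (gaussian a c) := by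
  unfold gaussian; fun_prop

theorem hasDerivAt_gaussian (x : ℝ) :
    HasDerivAt (gaussian a c) (-2 * a * (x - c) * gaussian a c x) x :=
  ((((hasDerivAt_id x).sub_const c).pow 2).const_mul (-a)).exp.congr_deriv (by
    simp only [gaussian, id_eq, Pi.pow_apply, Nat.cast_ofNat, Nat.add_one_sub_one, pow_one]; ring)

theorem two_mul_integral_sub_mul_gaussian (s t : ℝ) :
    2 * a * ∫ x in s..t, (x - c) * gaussian a c x = gaussian a c s - gaussian a c t := by
  have hg := continuous_gaussian (a := a) (c := c)
  have hftc := integral_eq_sub_of_hasDerivAt (a := s) (b := t)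
    (fun x _ => hasDerivAt_gaussian (a := a) (c := c) x)
    (by apply Continuous.intervalIntegrable; fun_prop)
  rw [← integral_const_mul]
  have : (fun x => 2 * a * ((x - c) * gaussian a c x))
      = fun x => -(-2 * a * (x - c) * gaussian a c x) := by
    funext x; ring
  rw [this, integral_neg, hftc]
  ring

theorem integral_gaussian_sub_two_mul_integral_sq_mul (s t : ℝ) :
    (∫ x in s..t, gaussian a c x) - 2 * a * ∫ x in s..t, (x - c) ^ 2 * gaussian a c x
      = (t - c) * gaussian a c t - (s - c) * gaussian a c s := by
  have hd : ∀ x, HasDerivAt (fun x => (x - c) * gaussian a c x)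
      (gaussian a c x - 2 * a * ((x - c) ^ 2 * gaussian a c x)) x :=
    fun x => (((hasDerivAt_id x).sub_const c).mul (hasDerivAt_gaussian x)).congr_deriv
      (by simp only [id_eq, one_mul]; ring)
  have hg := continuous_gaussian (a := a) (c := c)
  rw [← integral_const_mul, ← integral_sub (hg.intervalIntegrable _ _)
    (by apply Continuous.intervalIntegrable; fun_prop)]
  exact integral_eq_sub_of_hasDerivAt (fun x _ => hd x)
    (by apply Continuous.intervalIntegrable; fun_prop)

theorem integral_sub_mul_gaussian_mem_Icc {s t : ℝ} (hst : s ≤ t) :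
    ∫ x in s..t, (x - c) * gaussian a c x
      ∈ Set.Icc ((s - c) * ∫ x in s..t, gaussian a c x)
        ((t - c) * ∫ x in s..t, gaussian a c x) := by
  have hg := continuous_gaussian (a := a) (c := c)
  have hconst : ∀ r : ℝ, IntervalIntegrable (fun x => r * gaussian a c x) volume s t :=
    fun r => (hg.intervalIntegrable s t).const_mul r
  have hmoment : IntervalIntegrable (fun x => (x - c) * gaussian a c x) volume s t := by
    apply Continuous.intervalIntegrable; fun_prop
  rw [← integral_const_mul, ← integral_const_mul]
  exact ⟨integral_mono_on hst (hconst _) hmoment fun x hx =>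
      mul_le_mul_of_nonneg_right (sub_le_sub_right hx.1 c) (gaussian_pos x).le,
    integral_mono_on hst hmoment (hconst _) fun x hx =>
      mul_le_mul_of_nonneg_right (sub_le_sub_right hx.2 c) (gaussian_pos x).le⟩

theorem integral_gaussian_mul_le_sq (ha : 0 ≤ a) {s t : ℝ} (hst : s ≤ t) :
    (∫ x in s..t, gaussian a c x)
        * (-2 * a * ((t - c) * gaussian a c t - (s - c) * gaussian a c s))
      ≤ (gaussian a c t - gaussian a c s) ^ 2 := by
  obtain ⟨hlow, hhigh⟩ := integral_sub_mul_gaussian_mem_Icc (a := a) (c := c) hst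
  have hJ1 := two_mul_integral_sub_mul_gaussian (a := a) (c := c) s t
  have h1 := mul_nonneg (mul_nonneg ha (gaussian_pos (a := a) (c := c) t).le) (sub_nonneg.2 hhigh)
  have h2 := mul_nonneg (mul_nonneg ha (gaussian_pos (a := a) (c := c) s).le) (sub_nonneg.2 hlow)
  linear_combination 2 * h1 + 2 * h2 + (gaussian a c s - gaussian a c t) * hJ1

theorem neg_two_mul_sq_le_integral_gaussian_mul_sub_sq {s t : ℝ} (hst : s ≤ t) :
    -2 * a * (∫ x in s..t, gaussian a c x) ^ 2
      ≤ (∫ x in s..t, gaussian a c x)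
          * (-2 * a * ((t - c) * gaussian a c t - (s - c) * gaussian a c s))
        - (gaussian a c t - gaussian a c s) ^ 2 := by
  have hg := continuous_gaussian (a := a) (c := c)
  have hCS := sq_integral_mul_le_integral_mul_integral_sq_mul (f := fun x => x - c) hst
    (hg.intervalIntegrable _ _) (by apply Continuous.intervalIntegrable; fun_prop)
    (by apply Continuous.intervalIntegrable; fun_prop) fun x _ => (gaussian_pos x).le
  have hJ1 := two_mul_integral_sub_mul_gaussian (a := a) (c := c) s t
  have hJ2 := integral_gaussian_sub_two_mul_integral_sq_mul (a := a) (c := c) s t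
  linear_combination (2 * a) ^ 2 * hCS - 2 * a * (∫ x in s..t, gaussian a c x) * hJ2
    + (gaussian a c t - gaussian a c s - 2 * a * ∫ x in s..t, (x - c) * gaussian a c x) * hJ1

theorem gaussianWindow_pos (hΔ : 0 < Δ) (t : ℝ) : 0 < gaussianWindow a Δ c t :=
  intervalIntegral_pos_of_pos (continuous_gaussian.intervalIntegrable _ _) gaussian_pos
    (by linarith)

theorem hasDerivAt_gaussianWindow (t : ℝ) :
    HasDerivAt (gaussianWindow a Δ c) (gaussian a c (t + Δ) - gaussian a c t) t :=
  continuous_gaussian.hasDerivAt_integral_window Δ t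

theorem hasDerivAt_gaussian_add_sub_gaussian (t : ℝ) :
    HasDerivAt (fun t => gaussian a c (t + Δ) - gaussian a c t)
      (-2 * a * ((t + Δ - c) * gaussian a c (t + Δ) - (t - c) * gaussian a c t)) t :=
  (((hasDerivAt_gaussian (t + Δ)).comp_add_const t Δ).sub (hasDerivAt_gaussian t)).congr_deriv
    (by ring)

theorem abs_log_gaussianWindow_sub_tangent_le (ha : 0 ≤ a) (hΔ : 0 < Δ) (x y : ℝ) :
    |log (gaussianWindow a Δ c y) - log (gaussianWindow a Δ c x)
      - deriv (fun t => log (gaussianWindow a Δ c t)) x * (y - x)| ≤ a * (y - x) ^ 2 := by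
  set G := gaussianWindow a Δ c
  set G' := fun t => gaussian a c (t + Δ) - gaussian a c t
  set G'' := fun t => -2 * a * ((t + Δ - c) * gaussian a c (t + Δ) - (t - c) * gaussian a c t)
  have hG : ∀ t, G t ≠ 0 := fun t => (gaussianWindow_pos hΔ t).ne'
  have hlog : ∀ t, HasDerivAt (fun t => log (G t)) (G' t / G t) t :=
    fun t => (hasDerivAt_gaussianWindow t).log (hG t)
  have hlog' :
      ∀ t, HasDerivAt (fun t => G' t / G t) ((G'' t * G t - G' t * G' t) / G t ^ 2) t :=
    fun t => (hasDerivAt_gaussian_add_sub_gaussian t).div (hasDerivAt_gaussianWindow t) (hG t)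
  have hconcave : ∀ t, 0 ≤ -((G'' t * G t - G' t * G' t) / G t ^ 2) := fun t => by
    have := integral_gaussian_mul_le_sq (a := a) (c := c) ha (by linarith : t ≤ t + Δ)
    rw [neg_nonneg]
    exact div_nonpos_of_nonpos_of_nonneg (by simp only [G, G', G'', gaussianWindow]; linarith)
      (sq_nonneg _)
  have hsemiconvex : ∀ t, -2 * a ≤ (G'' t * G t - G' t * G' t) / G t ^ 2 := fun t => by
    have := neg_two_mul_sq_le_integral_gaussian_mul_sub_sq (a := a) (c := c)
      (by linarith : t ≤ t + Δ)
    rw [le_div_iff₀ (pow_pos (gaussianWindow_pos hΔ t) 2)]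
    simp only [G, G', G'', gaussianWindow]
    linarith
  have hlower := add_deriv_mul_sub_add_le_of_le_deriv2 hlog hlog' hsemiconvex x y
  have hupper := add_deriv_mul_sub_add_le_of_le_deriv2 (fun t => (hlog t).neg)
    (fun t => (hlog' t).neg) hconcave x y
  simp only [Pi.neg_apply, zero_div, zero_mul, add_zero] at hupper
  rw [(hlog x).deriv, abs_le]
  constructor <;> linarith

end Gaussian

section TotalVariation

variable {ι : Type*} [Fintype ι]

theorem sub_mul_sum_mul_abs_sub_one_le {q X : ι → ℝ} {m M : ℝ} (hq : ∀ k, 0 ≤ q k)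
    (hq1 : ∑ k, q k = 1) (hqX : ∑ k, q k * X k = 1) (hm : ∀ k, m ≤ X k) (hM : ∀ k, X k ≤ M) :
    (M - m) * ∑ k, q k * |X k - 1| ≤ 2 * (M - 1) * (1 - m) := by
  have hm1 : m ≤ 1 := calc
    m = ∑ k, q k * m := by rw [← Finset.sum_mul, hq1, one_mul]
    _ ≤ ∑ k, q k * X k := Finset.sum_le_sum fun k _ => mul_le_mul_of_nonneg_left (hm k) (hq k)
    _ = 1 := hqX
  have hM1 : 1 ≤ M := calc
    1 = ∑ k, q k * X k := hqX.symm
    _ ≤ ∑ k, q k * M := Finset.sum_le_sum fun k _ => mul_le_mul_of_nonneg_left (hM k) (hq k)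
    _ = M := by rw [← Finset.sum_mul, hq1, one_mul]
  have hchord : ∀ k, (M - m) * |X k - 1| ≤ (M - 1) * (X k - m) + (1 - m) * (M - X k) := by
    intro k
    rw [← abs_of_nonneg (sub_nonneg.2 ((hm k).trans (hM k))), ← abs_mul]
    have h1 := mul_nonneg (sub_nonneg.2 hm1) (sub_nonneg.2 (hM k))
    have h2 := mul_nonneg (sub_nonneg.2 hM1) (sub_nonneg.2 (hm k))
    exact abs_le.2 ⟨by linarith, by linarith⟩
  calc (M - m) * ∑ k, q k * |X k - 1| = ∑ k, q k * ((M - m) * |X k - 1|) := by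
        rw [Finset.mul_sum]; exact Finset.sum_congr rfl fun k _ => by ring
    _ ≤ ∑ k, q k * ((M - 1) * (X k - m) + (1 - m) * (M - X k)) :=
        Finset.sum_le_sum fun k _ => mul_le_mul_of_nonneg_left (hchord k) (hq k)
    _ = (M - 2 + m) * ∑ k, q k * X k + (M + m - 2 * m * M) * ∑ k, q k := by
        rw [Finset.mul_sum, Finset.mul_sum, ← Finset.sum_add_distrib]
        exact Finset.sum_congr rfl fun k _ => by ring
    _ = 2 * (M - 1) * (1 - m) := by rw [hq1, hqX]; ring

theorem sum_mul_abs_sub_one_le {q X : ι → ℝ} {m r : ℝ} (hr : 1 < r) (hm0 : 0 < m)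
    (hq : ∀ k, 0 ≤ q k) (hq1 : ∑ k, q k = 1) (hqX : ∑ k, q k * X k = 1)
    (hm : ∀ k, m ≤ X k) (hM : ∀ k, X k ≤ r ^ 2 * m) :
    ∑ k, q k * |X k - 1| ≤ r - 1 := by
  have hpos : 0 < r ^ 2 * m - m := by nlinarith [mul_pos hm0 (by nlinarith : 0 < r ^ 2 - 1)]
  refine le_of_mul_le_mul_left ?_ hpos
  have hcube : 0 ≤ m * (r - 1) ^ 3 := mul_nonneg hm0.le (pow_nonneg (by linarith) 3)
  calc (r ^ 2 * m - m) * ∑ k, q k * |X k - 1| ≤ 2 * (r ^ 2 * m - 1) * (1 - m) :=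
        sub_mul_sum_mul_abs_sub_one_le hq hq1 hqX hm hM
    _ ≤ (r ^ 2 * m - m) * (r - 1) := by
        linear_combination hcube + 2 * sq_nonneg (m * r - 1)

theorem sum_abs_div_sum_sub_div_sum_le [Nonempty ι] {w v : ι → ℝ} {C ε : ℝ} (hε : 0 < ε)
    (hw : ∀ k, 0 < w k) (hv : ∀ k, 0 < v k) (hwv : ∀ k, |log (w k) - log (v k) - C| ≤ ε) :
    ∑ k, |w k / ∑ l, w l - v k / ∑ l, v l| ≤ exp ε - 1 := by
  set W := ∑ l, w l
  set V := ∑ l, v l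
  have hW : 0 < W := Finset.sum_pos (fun k _ => hw k) Finset.univ_nonempty
  have hV : 0 < V := Finset.sum_pos (fun k _ => hv k) Finset.univ_nonempty
  have hratio : ∀ k, exp (C - ε) ≤ w k / v k ∧ w k / v k ≤ exp ε ^ 2 * exp (C - ε) := by
    intro k
    have h := abs_le.1 (hwv k)
    rw [← log_div (hw k).ne' (hv k).ne'] at h
    rw [sq, ← exp_add, ← exp_add, show ε + ε + (C - ε) = C + ε by ring]
    exact ⟨(le_log_iff_exp_le (div_pos (hw k) (hv k))).1 (by linarith),
      (log_le_iff_le_exp (div_pos (hw k) (hv k))).1 (by linarith)⟩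
  have hterm : ∀ k, w k / W - v k / V = v k / V * (V / W * (w k / v k) - 1) := fun k => by
    field_simp [(hv k).ne']
  have hq1 : ∑ k, v k / V = 1 := by rw [← Finset.sum_div, div_self hV.ne']
  have hqX : ∑ k, v k / V * (V / W * (w k / v k)) = 1 := by
    have h : ∀ k, v k / V * (V / W * (w k / v k)) = w k / W := fun k => by
      field_simp [(hv k).ne']
    simp_rw [h]
    rw [← Finset.sum_div, div_self hW.ne']
  have hVW : 0 < V / W := div_pos hV hW
  calc ∑ k, |w k / W - v k / V| = ∑ k, v k / V * |V / W * (w k / v k) - 1| :=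
        Finset.sum_congr rfl fun k _ => by rw [hterm, abs_mul, abs_of_pos (div_pos (hv k) hV)]
    _ ≤ exp ε - 1 := sum_mul_abs_sub_one_le (one_lt_exp_iff.2 hε) (by positivity)
        (fun k => (div_pos (hv k) hV).le) hq1 hqX
        (fun k => mul_le_mul_of_nonneg_left (hratio k).1 hVW.le)
        (fun k => (mul_le_mul_of_nonneg_left (hratio k).2 hVW.le).trans_eq (by ring))

end TotalVariation

/-- the reduced state weights obtained from a Gaussian density
of bath states are close in total variation to the Gibbs weights at the
inverse temperature `β = (log g)'(E)`. -/
theorem gaussian_window_gibbs_approx (a Δ c : ℝ) (ha : 0 < a) (hΔ : 0 < Δ)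
    (g : ℝ → ℝ) (hg : ∀ E, g E = ∫ x in E..(E + Δ), Real.exp (-a * (x - c) ^ 2))
    {ι : Type*} [Fintype ι] [Nonempty ι] (M : ℝ) (hM : 0 < M)
    (Es : ι → ℝ) (hEs : ∀ k, Es k ∈ Set.Icc (-M) M)
    (E β : ℝ) (hβ : β = deriv (fun E' => Real.log (g E')) E)
    (p q : ι → ℝ)
    (hp : ∀ k, p k = g (E - Es k) / ∑ l, g (E - Es l))
    (hq : ∀ k, q k = Real.exp (-β * Es k) / ∑ l, Real.exp (-β * Es l)) :
    (1 / 2) * ∑ k, |p k - q k| ≤ (1 / 2) * (Real.exp (a * M ^ 2) - 1) := by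
  obtain rfl : g = gaussianWindow a Δ c := funext hg
  have hTV := sum_abs_div_sum_sub_div_sum_le (w := fun k => gaussianWindow a Δ c (E - Es k))
    (v := fun k => exp (-β * Es k)) (C := log (gaussianWindow a Δ c E))
    (mul_pos ha (pow_pos hM 2)) (fun k => gaussianWindow_pos hΔ (E - Es k))
    (fun k => exp_pos (-β * Es k)) fun k => ?_
  · simp only [hp, hq]
    linarith
  have htangent := abs_log_gaussianWindow_sub_tangent_le (c := c) ha.le hΔ E (E - Es k)
  rw [← hβ, show E - Es k - E = -Es k by ring, neg_sq] at htangent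
  calc |log (gaussianWindow a Δ c (E - Es k)) - log (exp (-β * Es k))
        - log (gaussianWindow a Δ c E)|
      = |log (gaussianWindow a Δ c (E - Es k)) - log (gaussianWindow a Δ c E) - β * -Es k| := by
        rw [log_exp]; ring_nf
    _ ≤ a * Es k ^ 2 := htangent
    _ ≤ a * M ^ 2 := mul_le_mul_of_nonneg_left (sq_le_sq' (hEs k).1 (hEs k).2) ha.le
end
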